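/- In a finite-horizon MDP, for any state s, step h, and action a: W_h(s) · (Q*_h(s,a) − Q^π̂_h(s,a)) ≤ sup_π ∑_{s'} w^π_{h+1}(s') (V*_{h+1}(s') − V^π̂_{h+1}(s')), where W_h(s) = sup_π Pr_π[s_h = s]. -/
import Mathlib


open Finset in
/-- A finite-horizon MDP with finite state and action spaces, horizon `H`
(steps indexed `0, …, H-1`), initial state distribution `P0`, transition kernels `P`,
and mean rewards `r` in `[0,1]`. -/
structure MDP (S A : Type*) [Fintype S] [Fintype A] where
  H : ℕ
  P0 : S → ℝ
  P0_nonneg : ∀ s, 0 ≤ P0 s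
  P0_sum : ∑ s, P0 s = 1
  P : ℕ → S → A → S → ℝ
  P_nonneg : ∀ h s a s', 0 ≤ P h s a s'
  P_sum : ∀ h s a, ∑ s', P h s a s' = 1
  r : ℕ → S → A → ℝ
  r_nonneg : ∀ h s a, 0 ≤ r h s a
  r_le_one : ∀ h s a, r h s a ≤ 1

/-- A (stochastic) policy: `π h s a` is the probability of playing `a` in state `s` at step `h`. -/
def Policy (S A : Type*) : Type _ := ℕ → S → A → ℝ

/-- `π` is a genuine stochastic policy: nonnegative and summing to one over actions. -/
def IsPolicy {S A : Type*} [Fintype A] (π : Policy S A) : Prop :=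
  (∀ h s a, 0 ≤ π h s a) ∧ ∀ h s, ∑ a, π h s a = 1

/-- The stochastic policy corresponding to a deterministic policy `d`. -/
noncomputable def detPolicy {S A : Type*} [DecidableEq A] (d : ℕ → S → A) : Policy S A :=
  fun h s a => if a = d h s then 1 else 0

variable {S A : Type*} [Fintype S] [Fintype A]

/-- Value function computed backwards: `Vaux M π k s` is the expected reward-to-go of
policy `π` from state `s` when `k` steps remain (i.e. at step `H - k`). -/
noncomputable def Vaux (M : MDP S A) (π : Policy S A) : ℕ → S → ℝ
  | 0, _ => 0
  | (k+1), s =>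
      ∑ a, π (M.H - (k+1)) s a *
        (M.r (M.H - (k+1)) s a + ∑ s', M.P (M.H - (k+1)) s a s' * Vaux M π k s')

/-- `Vfun M π h s = V^π_h(s)`, the value of policy `π` at state `s`, step `h`. -/
noncomputable def Vfun (M : MDP S A) (π : Policy S A) (h : ℕ) (s : S) : ℝ :=
  Vaux M π (M.H - h) s

/-- `Qfun M π h s a = Q^π_h(s,a)` via the Bellman equation. -/
noncomputable def Qfun (M : MDP S A) (π : Policy S A) (h : ℕ) (s : S) (a : A) : ℝ :=
  M.r h s a + ∑ s', M.P h s a s' * Vfun M π (h+1) s'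

/-- `visit M π h s = w^π_h(s) = Pr_π[s_h = s]`, the state visitation probability. -/
noncomputable def visit (M : MDP S A) (π : Policy S A) : ℕ → S → ℝ
  | 0, s => M.P0 s
  | (h+1), s => ∑ s', ∑ a, visit M π h s' * π h s' a * M.P h s' a s

/-- `visitSA M π h s a = w^π_h(s,a) = Pr_π[s_h = s, a_h = a]`. -/
noncomputable def visitSA (M : MDP S A) (π : Policy S A) (h : ℕ) (s : S) (a : A) : ℝ :=
  visit M π h s * π h s a

/-- `Vstar M h s = V^*_h(s)`, the optimal value function. -/
noncomputable def Vstar (M : MDP S A) (h : ℕ) (s : S) : ℝ :=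
  ⨆ π : {π : Policy S A // IsPolicy π}, Vfun M π.1 h s

/-- `Qstar M h s a = Q^*_h(s,a)`, the optimal Q-function. -/
noncomputable def Qstar (M : MDP S A) (h : ℕ) (s : S) (a : A) : ℝ :=
  M.r h s a + ∑ s', M.P h s a s' * Vstar M (h+1) s'

/-- `Wmax M h s = W_h(s) = sup_π Pr_π[s_h = s]`, the maximum reachability of `s` at step `h`. -/
noncomputable def Wmax (M : MDP S A) (h : ℕ) (s : S) : ℝ :=
  ⨆ π : {π : Policy S A // IsPolicy π}, visit M π.1 h s

/-- `V0 M π = V^π_0`, the value of policy `π`. -/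
noncomputable def V0 (M : MDP S A) (π : Policy S A) : ℝ :=
  ∑ s, M.P0 s * Vfun M π 0 s

/-- `Vstar0 M = V^*_0 = sup_π V^π_0`. -/
noncomputable def Vstar0 (M : MDP S A) : ℝ :=
  ⨆ π : {π : Policy S A // IsPolicy π}, V0 M π.1

section Aux

variable (M : MDP S A)

lemma visit_nonneg {π : Policy S A} (hπ : IsPolicy π) : ∀ h s, 0 ≤ visit M π h s := by
  intro h
  induction h with
  | zero => intro s; exact M.P0_nonneg s
  | succ n ih =>
      intro s
      apply Finset.sum_nonneg; intro s' _
      apply Finset.sum_nonneg; intro b _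
      have := ih s'
      have := hπ.1 n s' b
      have := M.P_nonneg n s' b s
      positivity

lemma visit_sum_one {π : Policy S A} (hπ : IsPolicy π) : ∀ h, ∑ s, visit M π h s = 1 := by
  intro h
  induction h with
  | zero => exact M.P0_sum
  | succ n ih =>
      show ∑ s, ∑ s', ∑ b, visit M π n s' * π n s' b * M.P n s' b s = 1
      rw [Finset.sum_comm]
      calc ∑ s', ∑ s, ∑ b, visit M π n s' * π n s' b * M.P n s' b s
          = ∑ s', ∑ b, ∑ s, visit M π n s' * π n s' b * M.P n s' b s := by
            congr 1; ext s'; rw [Finset.sum_comm]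
        _ = ∑ s', ∑ b, visit M π n s' * π n s' b := by
            congr 1; ext s'; congr 1; ext b
            rw [← Finset.mul_sum, M.P_sum, mul_one]
        _ = ∑ s', visit M π n s' := by
            congr 1; ext s'
            rw [← Finset.mul_sum, hπ.2 n s', mul_one]
        _ = 1 := ih

lemma visit_le_one {π : Policy S A} (hπ : IsPolicy π) (h : ℕ) (s : S) :
    visit M π h s ≤ 1 := by
  rw [← visit_sum_one M hπ h]
  exact Finset.single_le_sum (fun s' _ => visit_nonneg M hπ h s') (Finset.mem_univ s)

lemma Vaux_nonneg {π : Policy S A} (hπ : IsPolicy π) : ∀ k s, 0 ≤ Vaux M π k s := by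
  intro k
  induction k with
  | zero => intro s; simp [Vaux]
  | succ n ih =>
      intro s
      apply Finset.sum_nonneg; intro b _
      apply mul_nonneg (hπ.1 _ s b)
      apply add_nonneg (M.r_nonneg _ s b)
      apply Finset.sum_nonneg; intro s' _
      exact mul_nonneg (M.P_nonneg _ s b s') (ih s')

lemma Vaux_le {π : Policy S A} (hπ : IsPolicy π) : ∀ k s, Vaux M π k s ≤ (k : ℝ) := by
  intro k
  induction k with
  | zero => intro s; simp [Vaux]
  | succ n ih =>
      intro s
      calc Vaux M π (n+1) s
          ≤ ∑ b, π (M.H - (n+1)) s b * ((n : ℝ) + 1) := by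
            apply Finset.sum_le_sum; intro b _
            apply mul_le_mul_of_nonneg_left _ (hπ.1 _ s b)
            have h1 : M.r (M.H - (n+1)) s b ≤ 1 := M.r_le_one _ s b
            have h2 : ∑ s', M.P (M.H - (n+1)) s b s' * Vaux M π n s' ≤ (n : ℝ) := by
              calc ∑ s', M.P (M.H - (n+1)) s b s' * Vaux M π n s'
                  ≤ ∑ s', M.P (M.H - (n+1)) s b s' * (n : ℝ) := by
                    apply Finset.sum_le_sum; intro s' _
                    exact mul_le_mul_of_nonneg_left (ih s') (M.P_nonneg _ s b s')
                _ = (n : ℝ) := by rw [← Finset.sum_mul, M.P_sum, one_mul]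
            linarith
        _ = (n : ℝ) + 1 := by rw [← Finset.sum_mul, hπ.2, one_mul]
        _ = ((n + 1 : ℕ) : ℝ) := by push_cast; ring

lemma Vfun_nonneg {π : Policy S A} (hπ : IsPolicy π) (h : ℕ) (s : S) : 0 ≤ Vfun M π h s :=
  Vaux_nonneg M hπ _ s

lemma Vfun_le {π : Policy S A} (hπ : IsPolicy π) (h : ℕ) (s : S) :
    Vfun M π h s ≤ (M.H : ℝ) :=
  le_trans (Vaux_le M hπ _ s) (by exact_mod_cast Nat.cast_le.2 (Nat.sub_le _ _))

lemma Vstar_bdd (h : ℕ) (s : S) :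
    BddAbove (Set.range fun π : {π : Policy S A // IsPolicy π} => Vfun M π.1 h s) := by
  refine ⟨(M.H : ℝ), ?_⟩
  rintro x ⟨π, rfl⟩
  exact Vfun_le M π.2 h s

lemma Vfun_le_Vstar {π : Policy S A} (hπ : IsPolicy π) (h : ℕ) (s : S) :
    Vfun M π h s ≤ Vstar M h s :=
  le_ciSup (Vstar_bdd M h s) ⟨π, hπ⟩

lemma Vstar_le {π0 : Policy S A} (hπ0 : IsPolicy π0) (h : ℕ) (s : S) :
    Vstar M h s ≤ (M.H : ℝ) := by
  have : Nonempty {π : Policy S A // IsPolicy π} := ⟨⟨π0, hπ0⟩⟩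
  exact ciSup_le fun π => Vfun_le M π.2 h s

/-- Policies agreeing below step `n` have the same visitation at step `n`. -/
lemma visit_congr {π π' : Policy S A} :
    ∀ n, (∀ k, k < n → π k = π' k) → visit M π n = visit M π' n := by
  intro n
  induction n with
  | zero => intro _; rfl
  | succ m ih =>
      intro hag
      have hm : visit M π m = visit M π' m := ih fun k hk => hag k (Nat.lt_succ_of_lt hk)
      funext s
      show ∑ s', ∑ b, visit M π m s' * π m s' b * M.P m s' b s
         = ∑ s', ∑ b, visit M π' m s' * π' m s' b * M.P m s' b s
      rw [hm, hag m (Nat.lt_succ_self m)]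

open Classical in
/-- Modify `π` to play `a` at state `s`, step `h`. -/
noncomputable def modPolicy (π : Policy S A) (h : ℕ) (s : S) (a : A) : Policy S A :=
  fun k s' b => if k = h ∧ s' = s then (if b = a then 1 else 0) else π k s' b

open Classical in
lemma modPolicy_isPolicy {π : Policy S A} (hπ : IsPolicy π) (h : ℕ) (s : S) (a : A) :
    IsPolicy (modPolicy π h s a) := by
  constructor
  · intro k s' b
    unfold modPolicy
    split
    · split <;> norm_num
    · exact hπ.1 k s' b
  · intro k s'
    unfold modPolicy
    by_cases hks : k = h ∧ s' = s
    · simp only [hks, and_self, if_true]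
      rw [Finset.sum_ite_eq' Finset.univ a (fun _ => (1:ℝ))]
      simp
    · simp only [hks, if_false]
      exact hπ.2 k s'

end Aux

/-- Reachability-weighted `Q`-error bound: for any state `s`, step `h`, and action `a`,
`W_h(s) (Q^*_h(s,a) - Q^π̂_h(s,a)) ≤ sup_π ∑_{s'} w^π_{h+1}(s')(V^*_{h+1}(s') - V^π̂_{h+1}(s'))`. -/
theorem reachability_Q_error [Nonempty A] (M : MDP S A)
    (πhat : Policy S A) (hπ : IsPolicy πhat) (h : ℕ) (s : S) (a : A) :
    Wmax M h s * (Qstar M h s a - Qfun M πhat h s a)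
      ≤ ⨆ π : {π : Policy S A // IsPolicy π},
          ∑ s', visit M π.1 (h+1) s' * (Vstar M (h+1) s' - Vfun M πhat (h+1) s') := by
  classical
  have hne : Nonempty {π : Policy S A // IsPolicy π} := ⟨⟨πhat, hπ⟩⟩
  set Δ : S → ℝ := fun s' => Vstar M (h+1) s' - Vfun M πhat (h+1) s' with hΔdef
  have hΔ0 : ∀ s', 0 ≤ Δ s' := fun s' =>
    sub_nonneg.2 (Vfun_le_Vstar M hπ (h+1) s')
  have hΔH : ∀ s', Δ s' ≤ (M.H : ℝ) := fun s' => by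
    have h1 := Vstar_le M hπ (h+1) s'
    have h2 := Vfun_nonneg M hπ (h+1) s'
    simp only [hΔdef]; linarith
  -- the difference of Q-values
  have hQ : Qstar M h s a - Qfun M πhat h s a = ∑ s', M.P h s a s' * Δ s' := by
    simp only [Qstar, Qfun, hΔdef, mul_sub]
    rw [Finset.sum_sub_distrib]
    ring
  have hD0 : 0 ≤ Qstar M h s a - Qfun M πhat h s a := by
    rw [hQ]
    exact Finset.sum_nonneg fun s' _ => mul_nonneg (M.P_nonneg h s a s') (hΔ0 s')
  -- RHS is bounded above
  have hbdd : BddAbove (Set.range fun π : {π : Policy S A // IsPolicy π} =>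
      ∑ s', visit M π.1 (h+1) s' * Δ s') := by
    refine ⟨(Fintype.card S : ℝ) * M.H, ?_⟩
    rintro x ⟨π, rfl⟩
    calc ∑ s', visit M π.1 (h+1) s' * Δ s'
        ≤ ∑ s' : S, (1 : ℝ) * (M.H : ℝ) := by
          apply Finset.sum_le_sum; intro s' _
          exact mul_le_mul (visit_le_one M π.2 (h+1) s') (hΔH s') (hΔ0 s')
            zero_le_one
      _ = (Fintype.card S : ℝ) * M.H := by
          rw [Finset.sum_const, Finset.card_univ]; simp [mul_assoc]
  -- key step: for each π, visit π h s * D is at most the RHS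
  have key : ∀ π : {π : Policy S A // IsPolicy π},
      visit M π.1 h s * (Qstar M h s a - Qfun M πhat h s a) ≤ ⨆ π : {π : Policy S A // IsPolicy π},
        ∑ s', visit M π.1 (h+1) s' * Δ s' := by
    intro π
    set π' : Policy S A := modPolicy π.1 h s a with hπ'def
    have hπ'pol : IsPolicy π' := modPolicy_isPolicy π.2 h s a
    have hagree : ∀ k, k < h → π.1 k = π' k := by
      intro k hk
      funext s' b
      simp [hπ'def, modPolicy, Nat.ne_of_lt hk]
    have hvis : visit M π.1 h = visit M π' h := visit_congr M h hagree
    have hstep : ∀ s', visit M π.1 h s * M.P h s a s' ≤ visit M π' (h+1) s' := by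
      intro s'
      show visit M π.1 h s * M.P h s a s'
          ≤ ∑ s'', ∑ b, visit M π' h s'' * π' h s'' b * M.P h s'' b s'
      have hterm : visit M π.1 h s * M.P h s a s'
          = visit M π' h s * π' h s a * M.P h s a s' := by
        rw [hvis]
        have : π' h s a = 1 := by simp [hπ'def, modPolicy]
        rw [this, mul_one]
      rw [hterm]
      have hnn : ∀ s'' ∈ Finset.univ, (0:ℝ) ≤
          ∑ b, visit M π' h s'' * π' h s'' b * M.P h s'' b s' := by
        intro s'' _
        apply Finset.sum_nonneg; intro b _
        exact mul_nonneg (mul_nonneg (visit_nonneg M hπ'pol h s'') (hπ'pol.1 h s'' b))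
          (M.P_nonneg h s'' b s')
      refine le_trans ?_ (Finset.single_le_sum hnn (Finset.mem_univ s))
      exact Finset.single_le_sum (fun b _ => mul_nonneg (mul_nonneg
        (visit_nonneg M hπ'pol h s) (hπ'pol.1 h s b)) (M.P_nonneg h s b s'))
        (Finset.mem_univ a)
    calc visit M π.1 h s * (Qstar M h s a - Qfun M πhat h s a)
        = ∑ s', visit M π.1 h s * M.P h s a s' * Δ s' := by
          rw [hQ, Finset.mul_sum]
          congr 1; ext s'; ring
      _ ≤ ∑ s', visit M π' (h+1) s' * Δ s' := by
          apply Finset.sum_le_sum; intro s' _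
          exact mul_le_mul_of_nonneg_right (hstep s') (hΔ0 s')
      _ ≤ _ := le_ciSup hbdd ⟨π', hπ'pol⟩
  have heq : Wmax M h s * (Qstar M h s a - Qfun M πhat h s a)
      = ⨆ π : {π : Policy S A // IsPolicy π},
          visit M π.1 h s * (Qstar M h s a - Qfun M πhat h s a) :=
    Real.iSup_mul_of_nonneg hD0 _
  rw [heq]
  exact ciSup_le key
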